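/- arXiv:1501.00033 — 2 statements merged into one kernel-verified Lean document; each statement's English description precedes it below -/
import Mathlib

section
/- Let n ≥ 2 and let α, α_1, ..., α_n be real numbers in [0, π] such that α ≤ α_1 + ... + α_n. Then 1 - cos(α) ≤ n · Σ_{i=1}^n (1 - cos(α_i)). -/
open Real Finset

lemma sin_sum_le {n : ℕ} (f : Fin n → ℝ) (s : Finset (Fin n))
    (h0 : ∀ i, 0 ≤ f i) (hs : ∑ i ∈ s, f i ≤ π / 2) :
    Real.sin (∑ i ∈ s, f i) ≤ ∑ i ∈ s, Real.sin (f i) := by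
  induction s using Finset.induction with
  | empty => simp
  | @insert a s hnot ih =>
    rw [Finset.sum_insert hnot] at hs ⊢
    rw [Finset.sum_insert hnot]
    have hsum0 : 0 ≤ ∑ i ∈ s, f i := Finset.sum_nonneg fun i _ => h0 i
    have hfa : 0 ≤ f a := h0 a
    have h1 : Real.sin (f a + ∑ i ∈ s, f i)
        = Real.sin (f a) * Real.cos (∑ i ∈ s, f i)
          + Real.cos (f a) * Real.sin (∑ i ∈ s, f i) := Real.sin_add _ _
    have hsa : 0 ≤ Real.sin (f a) :=
      Real.sin_nonneg_of_nonneg_of_le_pi hfa (by linarith [Real.pi_pos])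
    have hss : 0 ≤ Real.sin (∑ i ∈ s, f i) :=
      Real.sin_nonneg_of_nonneg_of_le_pi hsum0 (by linarith [Real.pi_pos])
    have h2 : Real.sin (f a) * Real.cos (∑ i ∈ s, f i) ≤ Real.sin (f a) := by
      nlinarith [Real.cos_le_one (∑ i ∈ s, f i)]
    have h3 : Real.cos (f a) * Real.sin (∑ i ∈ s, f i) ≤ Real.sin (∑ i ∈ s, f i) := by
      nlinarith [Real.cos_le_one (f a)]
    have := ih (by linarith)
    linarith

theorem stmt0 (n : ℕ) (hn : 2 ≤ n) (α : ℝ) (a : Fin n → ℝ)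
    (hα : α ∈ Set.Icc 0 Real.pi) (ha : ∀ i, a i ∈ Set.Icc 0 Real.pi)
    (hle : α ≤ ∑ i, a i) :
    1 - Real.cos α ≤ (n : ℝ) * ∑ i, (1 - Real.cos (a i)) := by
  obtain ⟨hα0, hαπ⟩ := hα
  have hpi := Real.pi_pos
  -- key: sin(α/2) ≤ ∑ sin(a i / 2)
  have key : Real.sin (α / 2) ≤ ∑ i, Real.sin (a i / 2) := by
    rcases le_or_gt (∑ i, a i) π with hcase | hcase
    · -- use monotonicity and subadditivity
      have h1 : Real.sin (α / 2) ≤ Real.sin ((∑ i, a i) / 2) := by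
        apply Real.sin_le_sin_of_le_of_le_pi_div_two (by linarith) (by linarith) (by linarith)
      have h2 : Real.sin ((∑ i, a i) / 2) ≤ ∑ i, Real.sin (a i / 2) := by
        have := sin_sum_le (fun i => a i / 2) Finset.univ
          (fun i => by linarith [(ha i).1]) (by rw [← Finset.sum_div]; linarith)
        simpa [← Finset.sum_div] using this
      linarith
    · -- sum of sins ≥ 1 ≥ sin(α/2)
      have h1 : Real.sin (α / 2) ≤ 1 := Real.sin_le_one _
      have h2 : (1 : ℝ) ≤ ∑ i, Real.sin (a i / 2) := by
        have : ∀ i, a i / π ≤ Real.sin (a i / 2) := fun i => by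
          have := Real.mul_le_sin (x := a i / 2) (by linarith [(ha i).1]) (by linarith [(ha i).2])
          calc a i / π = 2 / π * (a i / 2) := by field_simp
          _ ≤ _ := this
        calc (1 : ℝ) = π / π := by field_simp
        _ ≤ (∑ i, a i) / π := by gcongr
        _ = ∑ i, a i / π := Finset.sum_div _ _ _
        _ ≤ _ := Finset.sum_le_sum fun i _ => this i
      linarith
  have hsin0 : 0 ≤ Real.sin (α / 2) :=
    Real.sin_nonneg_of_nonneg_of_le_pi (by linarith) (by linarith)
  have hcs : (∑ i, Real.sin (a i / 2)) ^ 2 ≤ (n : ℝ) * ∑ i, Real.sin (a i / 2) ^ 2 := by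
    have := sq_sum_le_card_mul_sum_sq (s := (Finset.univ : Finset (Fin n)))
      (f := fun i => Real.sin (a i / 2))
    simpa using this
  have hsq : Real.sin (α / 2) ^ 2 ≤ (n : ℝ) * ∑ i, Real.sin (a i / 2) ^ 2 := by
    have := pow_le_pow_left₀ hsin0 key 2
    linarith
  have half : ∀ x : ℝ, 1 - Real.cos x = 2 * Real.sin (x / 2) ^ 2 := fun x => by
    have h := Real.sin_sq_eq_half_sub (x / 2)
    rw [show 2 * (x / 2) = x by ring] at h
    linarith
  have hc := half α
  have hci : ∀ i, 1 - Real.cos (a i) = 2 * Real.sin (a i / 2) ^ 2 := fun i => half (a i)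
  calc 1 - Real.cos α = 2 * Real.sin (α / 2) ^ 2 := hc
  _ ≤ 2 * ((n : ℝ) * ∑ i, Real.sin (a i / 2) ^ 2) := by linarith
  _ = (n : ℝ) * ∑ i, (1 - Real.cos (a i)) := by
      simp only [hci, Finset.mul_sum]
      exact Finset.sum_congr rfl fun i _ => by ring
end

section
/- Let P = (p, 1-p) and Q = (q, 1-q) be probability distributions on {0,1}. If the Kullback–Leibler divergence S(P‖Q) = p·log(p/q) + (1-p)·log((1-p)/(1-q)) satisfies S(P‖Q) ≤ δ and p < δ, then q ≤ 4δ. -/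
open Classical in
/-- The Kullback–Leibler divergence (base 2) between the binary distributions
`(p, 1-p)` and `(q, 1-q)`, valued in the extended reals: it is `⊤` when
`(p,1-p)` is not absolutely continuous with respect to `(q,1-q)`, and the
convention `0 · log (0/q) = 0` is automatic since `0 * x = 0`. -/
noncomputable def klBin (p q : ℝ) : EReal :=
  if (q = 0 ∧ p ≠ 0) ∨ (q = 1 ∧ p ≠ 1) then ⊤
  else ((p * Real.logb 2 (p / q) + (1 - p) * Real.logb 2 ((1 - p) / (1 - q)) : ℝ) : EReal)

theorem stmt2 (p q δ : ℝ) (hp : p ∈ Set.Icc (0 : ℝ) 1) (hq : q ∈ Set.Icc (0 : ℝ) 1)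
    (hδ : 0 < δ) (hkl : klBin p q ≤ (δ : EReal)) (hpδ : p < δ) :
    q ≤ 4 * δ := by
  obtain ⟨hp0, hp1⟩ := hp
  obtain ⟨hq0, hq1⟩ := hq
  by_cases hbig : 1 ≤ 4 * δ
  · linarith
  push_neg at hbig
  have hδ4 : δ < 1/4 := by linarith
  have hp1' : p < 1 := by linarith
  have hpne1 : p ≠ 1 := ne_of_lt hp1'
  -- rule out q = 1
  have hqne1 : q ≠ 1 := by
    intro hq1'
    rw [klBin, if_pos (Or.inr ⟨hq1', hpne1⟩)] at hkl
    exact absurd (top_le_iff.mp hkl) (EReal.coe_ne_top δ)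
  by_cases hq0' : q = 0
  · by_cases hp0' : p = 0
    · rw [hq0']; linarith
    · rw [klBin, if_pos (Or.inl ⟨hq0', hp0'⟩)] at hkl
      exact absurd (top_le_iff.mp hkl) (EReal.coe_ne_top δ)
  have hqpos : 0 < q := lt_of_le_of_ne hq0 (Ne.symm hq0')
  have hq1'' : q < 1 := lt_of_le_of_ne hq1 hqne1
  rw [klBin, if_neg (by rintro (⟨h, _⟩ | ⟨h, _⟩) <;> [exact hq0' h; exact hqne1 h])] at hkl
  have hkl' : p * Real.logb 2 (p / q) + (1 - p) * Real.logb 2 ((1 - p) / (1 - q)) ≤ δ :=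
    EReal.coe_le_coe_iff.mp hkl
  have hlog2 : (0:ℝ) < Real.log 2 := Real.log_pos (by norm_num)
  -- convert logb to log
  have hsum : p * Real.log (p / q) + (1 - p) * Real.log ((1 - p) / (1 - q)) ≤ δ * Real.log 2 := by
    have := hkl'
    rw [Real.logb, Real.logb] at this
    rw [div_eq_mul_inv, div_eq_mul_inv] at this
    have h2 : (p * (Real.log (p / q) * (Real.log 2)⁻¹)
        + (1 - p) * (Real.log ((1 - p) / (1 - q)) * (Real.log 2)⁻¹)) * Real.log 2
        ≤ δ * Real.log 2 := by
      exact mul_le_mul_of_nonneg_right this (le_of_lt hlog2)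
    calc p * Real.log (p / q) + (1 - p) * Real.log ((1 - p) / (1 - q))
        = (p * (Real.log (p / q) * (Real.log 2)⁻¹)
          + (1 - p) * (Real.log ((1 - p) / (1 - q)) * (Real.log 2)⁻¹)) * Real.log 2 := by
          field_simp
      _ ≤ δ * Real.log 2 := h2
  -- bound A : (1-p) * log ((1-p)/(1-q)) ≥ q - p
  have hA : q - p ≤ (1 - p) * Real.log ((1 - p) / (1 - q)) := by
    have hx : (0:ℝ) < (1 - q) / (1 - p) := div_pos (by linarith) (by linarith)
    have h := Real.log_le_sub_one_of_pos hx
    have hinv : Real.log ((1 - q) / (1 - p)) = - Real.log ((1 - p) / (1 - q)) := by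
      rw [← Real.log_inv]; congr 1; field_simp
    rw [hinv] at h
    have h1p : (0:ℝ) < 1 - p := by linarith
    have h2 : -Real.log ((1 - p) / (1 - q)) ≤ (1 - q) / (1 - p) - 1 := h
    have h3 : (1 - p) * (-Real.log ((1 - p) / (1 - q))) ≤ (1 - p) * ((1 - q) / (1 - p) - 1) :=
      mul_le_mul_of_nonneg_left h2 (le_of_lt h1p)
    have h4 : (1 - p) * ((1 - q) / (1 - p) - 1) = p - q := by field_simp; ring
    nlinarith
  -- bound B : p * log (p/q) ≥ - q / e
  have he : (0:ℝ) < Real.exp 1 := Real.exp_pos 1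
  have hB : -(q / Real.exp 1) ≤ p * Real.log (p / q) := by
    rcases eq_or_lt_of_le hp0 with h0 | hppos
    · rw [← h0]; simp; positivity
    · have hx : (0:ℝ) < q / (p * Real.exp 1) := by positivity
      have h := Real.log_le_sub_one_of_pos hx
      have hlx : Real.log (q / (p * Real.exp 1)) = Real.log q - Real.log p - 1 := by
        rw [Real.log_div (ne_of_gt hqpos) (by positivity), Real.log_mul (ne_of_gt hppos)
          (ne_of_gt he), Real.log_exp]
        ring
      rw [hlx] at h
      have hpq : Real.log (p / q) = Real.log p - Real.log q :=
        Real.log_div (ne_of_gt hppos) (ne_of_gt hqpos)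
      rw [hpq]
      -- from h : log q - log p - 1 ≤ q/(p e) - 1
      have h2 : Real.log q - Real.log p ≤ q / (p * Real.exp 1) := by linarith
      have h3 : p * (Real.log q - Real.log p) ≤ p * (q / (p * Real.exp 1)) :=
        mul_le_mul_of_nonneg_left h2 (le_of_lt hppos)
      have h4 : p * (q / (p * Real.exp 1)) = q / Real.exp 1 := by field_simp
      nlinarith
  -- combine
  have hmain : q - p - q / Real.exp 1 ≤ δ * Real.log 2 := by linarith
  have hl2 : Real.log 2 < 0.6931471808 := Real.log_two_lt_d9
  have hegt : (2.7182818283:ℝ) < Real.exp 1 := Real.exp_one_gt_d9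
  have hq_e : q / Real.exp 1 ≤ 0.37 * q := by
    rw [div_le_iff₀ he]
    nlinarith
  linarith [hmain, hq_e, mul_lt_mul_of_pos_left hl2 hδ]
end
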